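/- In the Heisenberg–Weyl bi-r-matrix bialgebra, the r-matrix r* = ½ e²∧e³ on the dual algebra j(3) (with brackets [e¹,e²]* = e², [e²,e³]* = 0, [e¹,e³]* = e³) induces on the double dual the brackets [e₁,e₂] = 0, [e₂,e₃] = e₁, [e₁,e₃] = 0, recovering the original Heisenberg algebra h(3). -/
import Mathlib


noncomputable section

/-- `e i` is the `i`-th standard basis vector (also used for the dual basis `eⁱ`). -/
def e (i : Fin 3) : Fin 3 → ℂ := fun j => if j = i then 1 else 0

/-- Bilinear bracket determined by structure constants `c`: `[e i, e j] = ∑ k, c i j k • e k`. -/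
def bra (c : Fin 3 → Fin 3 → Fin 3 → ℂ) (x y : Fin 3 → ℂ) : Fin 3 → ℂ :=
  fun k => ∑ i, ∑ j, x i * y j * c i j k

/-- Coordinates of the cobracket `δ(x) = [x⊗1 + 1⊗x, r]` where the r-matrix has
coordinates `ρ`, i.e. `r = ∑ ρ i j • e i ⊗ e j`. -/
def cob (c : Fin 3 → Fin 3 → Fin 3 → ℂ) (ρ : Fin 3 → Fin 3 → ℂ) (x : Fin 3 → ℂ) :
    Fin 3 → Fin 3 → ℂ :=
  fun a b => ∑ i, ∑ j, ρ i j * (bra c x (e i) a * e j b + e i a * bra c x (e j) b)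

/-- The induced bracket on the dual space: `⟨[ξ,η]*, e k⟩ = ⟨ξ ⊗ η, δ(e k)⟩`. -/
def dbra (c : Fin 3 → Fin 3 → Fin 3 → ℂ) (ρ : Fin 3 → Fin 3 → ℂ) (ξ η : Fin 3 → ℂ) :
    Fin 3 → ℂ :=
  fun k => ∑ a, ∑ b, ξ a * η b * cob c ρ (e k) a b

/-- Coordinates of the Schouten bracket
`[r,r]ₛ = [r₁₂,r₁₃] + [r₁₂,r₂₃] + [r₁₃,r₂₃]` in `L⊗L⊗L`. -/
def sch (c : Fin 3 → Fin 3 → Fin 3 → ℂ) (ρ : Fin 3 → Fin 3 → ℂ) :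
    Fin 3 → Fin 3 → Fin 3 → ℂ :=
  fun p q s => ∑ i, ∑ j, ∑ k, ∑ l, ρ i j * ρ k l *
    (c i k p * e j q * e l s + e i p * c j k q * e l s + e i p * e k q * c j l s)

/-- Structure constants of `j(3)`: `[e¹,e²]* = e²`, `[e²,e³]* = 0`, `[e¹,e³]* = e³`. -/
def cj : Fin 3 → Fin 3 → Fin 3 → ℂ := fun i j k =>
  (if i = 0 ∧ j = 1 ∧ k = 1 then 1 else if i = 0 ∧ j = 2 ∧ k = 2 then 1 else 0)
  - (if j = 0 ∧ i = 1 ∧ k = 1 then 1 else if j = 0 ∧ i = 2 ∧ k = 2 then 1 else 0)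

/-- The r-matrix `r* = ½ e²∧e³`. -/
def ρj : Fin 3 → Fin 3 → ℂ := fun i j =>
  if i = 1 ∧ j = 2 then 1 / 2 else if i = 2 ∧ j = 1 then -(1 / 2) else 0

/-- The r-matrix `r* = ½ e²∧e³` on `j(3)` induces on the double dual the brackets
`[e₁,e₂] = 0`, `[e₂,e₃] = e₁`, `[e₁,e₃] = 0`, recovering the Heisenberg algebra
`h(3)`. -/
theorem j3_dual_is_heisenberg :
    dbra cj ρj (e 0) (e 1) = 0 ∧
    dbra cj ρj (e 1) (e 2) = e 0 ∧
    dbra cj ρj (e 0) (e 2) = 0 := by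
  refine ⟨?_, ?_, ?_⟩ <;> funext k <;> fin_cases k <;>
    simp [dbra, cob, bra, e, cj, ρj, Fin.sum_univ_succ] <;> norm_num
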